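/- Let (Γ,p) be an Iterated Function System on [0,1] whose maps g_1,…,g_k are absolutely continuous homeomorphisms of [0,1] with absolutely continuous inverses. If the Markov operator P has a unique invariant measure μ in M_1(0,1), then μ is either absolutely continuous with respect to Lebesgue measure or singular with respect to Lebesgue measure. -/

import Mathlib

open MeasureTheory Set Filter Topology

noncomputable section

/-- The Markov operator of an iterated function system `(g, p)` on `[0,1]`. -/
def markovOp {k : ℕ} (g : Fin k → ℝ → ℝ) (p : Fin k → ℝ) (μ : Measure ℝ) : Measure ℝ :=
  ∑ i : Fin k, ENNReal.ofReal (p i) • Measure.map (g i) μ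

/-- `p` is a probability vector. -/
def ProbVec {k : ℕ} (p : Fin k → ℝ) : Prop :=
  (∀ i, 0 ≤ p i) ∧ ∑ i : Fin k, p i = 1

/-- Membership in `M₁(0,1)`: Borel probability measures on `[0,1]` giving full mass
to the open interval `(0,1)`. -/
def MemM1 (μ : Measure ℝ) : Prop :=
  IsProbabilityMeasure μ ∧ μ (Ioo (0 : ℝ) 1) = 1

/-- The set `N_{M,α}`. -/
def Nset (M α : ℝ) : Set (Measure ℝ) :=
  {μ | MemM1 μ ∧ ∀ x ∈ Icc (0 : ℝ) 1,
    μ (Icc (0 : ℝ) x) ≤ ENNReal.ofReal (M * x ^ α) ∧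
    μ (Icc (1 - x) 1) ≤ ENNReal.ofReal (M * x ^ α)}

/-- The class `C⁺_β`: continuous nondecreasing maps of `[0,1]` fixing `0` and `1`,
continuously differentiable on `[0,β]` and `[1-β,1]`. -/
structure CPlus (β : ℝ) (g : ℝ → ℝ) : Prop where
  mapsTo : MapsTo g (Icc (0 : ℝ) 1) (Icc (0 : ℝ) 1)
  contOn : ContinuousOn g (Icc (0 : ℝ) 1)
  mono : MonotoneOn g (Icc (0 : ℝ) 1)
  map_zero : g 0 = 0
  map_one : g 1 = 1
  c1_left : ContDiffOn ℝ 1 g (Icc (0 : ℝ) β)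
  c1_right : ContDiffOn ℝ 1 g (Icc (1 - β) 1)

/-- `g` is a homeomorphism of `[0,1]` (a continuous bijection of the compact
interval; continuity of the inverse is automatic). -/
def IsIccHomeo (g : ℝ → ℝ) : Prop :=
  MapsTo g (Icc (0 : ℝ) 1) (Icc (0 : ℝ) 1) ∧ InjOn g (Icc (0 : ℝ) 1) ∧
    SurjOn g (Icc (0 : ℝ) 1) (Icc (0 : ℝ) 1)

/-- Admissible iterated function system generated by homeomorphisms in `C⁺_β`:
strictly positive probabilities, maps moving every interior point both down and up,
and positive Lyapunov exponents at the common fixed points `0` and `1`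
(the one-sided derivatives there being positive). -/
structure Admissible (β : ℝ) {k : ℕ} (g : Fin k → ℝ → ℝ) (p : Fin k → ℝ) : Prop where
  cplus : ∀ i, CPlus β (g i)
  homeo : ∀ i, IsIccHomeo (g i)
  p_pos : ∀ i, 0 < p i
  p_sum : ∑ i : Fin k, p i = 1
  below : ∀ x ∈ Ioo (0 : ℝ) 1, ∃ i, g i x < x
  above : ∀ x ∈ Ioo (0 : ℝ) 1, ∃ j, x < g j x
  deriv0_pos : ∀ i, 0 < derivWithin (g i) (Icc (0 : ℝ) 1) 0
  deriv1_pos : ∀ i, 0 < derivWithin (g i) (Icc (0 : ℝ) 1) 1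
  lyap0 : 0 < ∑ i : Fin k, p i * Real.log (derivWithin (g i) (Icc (0 : ℝ) 1) 0)
  lyap1 : 0 < ∑ i : Fin k, p i * Real.log (derivWithin (g i) (Icc (0 : ℝ) 1) 1)

/-- Composition of the maps of an IFS along a finite word:
`wordComp g [i_n, …, i_1] = g i_n ∘ ⋯ ∘ g i_1`. -/
def wordComp {k : ℕ} (g : Fin k → ℝ → ℝ) : List (Fin k) → ℝ → ℝ
  | [], x => x
  | i :: w, x => g i (wordComp g w x)

/-- Composition of the first `n` maps along an infinite word `ω`:
`iterComp g ω n = g (ω (n-1)) ∘ ⋯ ∘ g (ω 0)`. -/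
def iterComp {k : ℕ} (g : Fin k → ℝ → ℝ) (ω : ℕ → Fin k) : ℕ → ℝ → ℝ
  | 0 => id
  | n + 1 => g (ω n) ∘ iterComp g ω n

/-- Supremum of `|f|` over a set `K`. -/
def supOn (K : Set ℝ) (f : ℝ → ℝ) : ℝ :=
  sSup ((fun x => |f x|) '' K)

/-- The Fortet–Mourier distance: the Fortet–Mourier norm of `μ - ν`. -/
def FMdist (μ ν : Measure ℝ) : ℝ :=
  sSup {r | ∃ f : ℝ → ℝ, (∀ x, |f x| ≤ 1) ∧ LipschitzWith 1 f ∧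
    r = (∫ x, f x ∂μ) - ∫ x, f x ∂ν}

/-- The distance `d₀` between two iterated function systems. -/
def dzero {k : ℕ} (S T : Fin k → ℝ → ℝ) (p q : Fin k → ℝ) : ℝ :=
  ∑ i : Fin k, (|p i - q i| + supOn (Icc (0 : ℝ) 1) (fun x => S i x - T i x))

/-- `g` is absolutely continuous on `[0,1]`. -/
def AbsCont (g : ℝ → ℝ) : Prop :=
  ∀ ε > 0, ∃ δ > 0, ∀ n : ℕ, ∀ a b : Fin n → ℝ,
    (∀ i, 0 ≤ a i ∧ a i ≤ b i ∧ b i ≤ 1) →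
    (Pairwise fun i j => Disjoint (Ioo (a i) (b i)) (Ioo (a j) (b j))) →
    ∑ i, (b i - a i) < δ → ∑ i, |g (b i) - g (a i)| < ε

/-- Membership in `M₁^ε`: some Borel subset of `[0,1]` of Lebesgue measure `< ε`
carries `μ`-mass `> 1 - ε/2`. -/
def MemM1eps (ε : ℝ) (μ : Measure ℝ) : Prop :=
  ∃ A : Set ℝ, MeasurableSet A ∧ A ⊆ Icc (0 : ℝ) 1 ∧
    volume A < ENNReal.ofReal ε ∧ ENNReal.ofReal (1 - ε / 2) < μ A

/-- Clamping of a real number to `[0,1]`. -/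
def clampI (x : ℝ) : ℝ := max 0 (min 1 x)

/-- A point of the space `F₀`: a `k`-tuple of homeomorphisms of `[0,1]` in `C⁺_β`
(together with their inverses) and a probability vector.  The maps are normalized
outside `[0,1]` by clamping, so that they are determined by their restrictions
to `[0,1]`. -/
structure Sys (β : ℝ) (k : ℕ) where
  g : Fin k → ℝ → ℝ
  ginv : Fin k → ℝ → ℝ
  p : Fin k → ℝ
  prob : ProbVec p
  cplus : ∀ i, CPlus β (g i)
  ginv_mapsTo : ∀ i, MapsTo (ginv i) (Icc (0 : ℝ) 1) (Icc (0 : ℝ) 1)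
  left_inv : ∀ i, ∀ x ∈ Icc (0 : ℝ) 1, ginv i (g i x) = x
  right_inv : ∀ i, ∀ y ∈ Icc (0 : ℝ) 1, g i (ginv i y) = y
  g_clamp : ∀ i x, g i x = g i (clampI x)
  ginv_clamp : ∀ i x, ginv i x = ginv i (clampI x)

/-- The metric `d` on the space of systems. -/
def dSys {β : ℝ} {k : ℕ} (A B : Sys β k) : ℝ :=
  ∑ i : Fin k,
    (|A.p i - B.p i|
      + supOn (Icc (0 : ℝ) 1) (fun x => A.g i x - B.g i x)
      + supOn (Icc (0 : ℝ) 1) (fun x => A.ginv i x - B.ginv i x)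
      + max
          (supOn (Icc (0 : ℝ) β)
            (fun x => derivWithin (A.g i) (Icc (0 : ℝ) β) x -
              derivWithin (B.g i) (Icc (0 : ℝ) β) x))
          (supOn (Icc (1 - β) 1)
            (fun x => derivWithin (A.g i) (Icc (1 - β) 1) x -
              derivWithin (B.g i) (Icc (1 - β) 1) x)))

/-- The set `F`: admissible systems all of whose maps are absolutely continuous. -/
def Fset (β : ℝ) (k : ℕ) : Set (Sys β k) :=
  {A | Admissible β A.g A.p ∧ ∀ i, AbsCont (A.g i)}

/-- Closure of a set of systems with respect to the metric `dSys`. -/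
def closureSys {β : ℝ} {k : ℕ} (S : Set (Sys β k)) : Set (Sys β k) :=
  {A | ∀ ε > 0, ∃ B ∈ S, dSys A B < ε}

/-- `S` is nowhere dense in the subspace `X` (with respect to `dSys`):
every ball centered in `X` contains a point of `X` some ball around which
misses `S ∩ X`. -/
def NowhereDenseIn {β : ℝ} {k : ℕ} (X S : Set (Sys β k)) : Prop :=
  ∀ A ∈ X, ∀ ε > 0, ∃ B ∈ X, dSys A B < ε ∧ ∃ δ > 0, ∀ C ∈ X ∩ S, δ ≤ dSys B C

/-- Cesàro averages `(ν + Pν + ⋯ + P^{n-1}ν)/n` of a measure under the Markov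
operator of an IFS. -/
def cesaro {k : ℕ} (g : Fin k → ℝ → ℝ) (p : Fin k → ℝ) (ν : Measure ℝ) (n : ℕ) :
    Measure ℝ :=
  (n : ENNReal)⁻¹ • ∑ j ∈ Finset.range n, (fun m => markovOp g p m)^[j] ν


/-!
Lebesgue-decompose `μ` into a singular part `σ` and an absolutely continuous part. Each map is
injective and continuous, hence monotone, and absolutely continuous, hence (Luzin's property (N))
carries Lebesgue-null sets to Lebesgue-null sets; so the Markov operator keeps singular measures
singular. Comparing singular parts in `Pμ = μ` shows `Pσ = σ`. If `σ ≠ 0`, its normalization is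
an invariant measure in `M₁(0,1)`, so by uniqueness it equals `μ`, which is therefore singular.
-/

theorem IsOpen.eq_Ioo_csInf_csSup {α : Type*} [ConditionallyCompleteLinearOrder α]
    [TopologicalSpace α] [OrderTopology α] [DenselyOrdered α] [NoMinOrder α] [NoMaxOrder α]
    {s : Set α} (hs : IsOpen s) (hc : IsConnected s) (hb : BddBelow s) (ha : BddAbove s) :
    s = Ioo (sInf s) (sSup s) :=
  ((hs.subset_interior_iff.2 (subset_Icc_csInf_csSup hb ha)).trans interior_Icc.subset).antisymm
    (hc.Ioo_csInf_csSup_subset hb ha)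

theorem IsOpen.exists_countable_pairwiseDisjoint_Ioo {V : Set ℝ} (hV : IsOpen V)
    (hbdd : Bornology.IsBounded V) :
    ∃ (ι : Type) (_ : Countable ι) (a b : ι → ℝ), (∀ i, a i < b i) ∧
      Pairwise (fun i j => Disjoint (Ioo (a i) (b i)) (Ioo (a j) (b j))) ∧
      V = ⋃ i, Ioo (a i) (b i) := by
  set t : Set (Set ℝ) := range fun q : {q : ℚ // (q : ℝ) ∈ V} => connectedComponentIn V q
  have hmem_t : ∀ x ∈ V, connectedComponentIn V x ∈ t := fun x hx => by
    obtain ⟨q, hq⟩ := Rat.denseRange_cast.exists_mem_open hV.connectedComponentIn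
      ⟨x, mem_connectedComponentIn hx⟩
    exact ⟨⟨q, connectedComponentIn_subset V x hq⟩, (connectedComponentIn_eq hq).symm⟩
  have hIoo : ∀ s ∈ t, s ⊆ V ∧ s = Ioo (sInf s) (sSup s) ∧ sInf s < sSup s := by
    rintro _ ⟨q, rfl⟩
    have hsub := connectedComponentIn_subset V (q : ℝ)
    have heq := hV.connectedComponentIn.eq_Ioo_csInf_csSup
      (isConnected_connectedComponentIn_iff.2 q.2) (hbdd.subset hsub).bddBelow
      (hbdd.subset hsub).bddAbove
    have hq : (q : ℝ) ∈ Ioo _ _ := heq ▸ mem_connectedComponentIn q.2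
    exact ⟨hsub, heq, hq.1.trans hq.2⟩
  have hdisj_t : ∀ s₁ ∈ t, ∀ s₂ ∈ t, s₁ ≠ s₂ → Disjoint s₁ s₂ := by
    rintro _ ⟨q₁, rfl⟩ _ ⟨q₂, rfl⟩ hne
    exact disjoint_left.2 fun z hz₁ hz₂ =>
      hne ((connectedComponentIn_eq hz₁).trans (connectedComponentIn_eq hz₂).symm)
  refine ⟨t, (countable_range _).to_subtype, fun s => sInf s.1, fun s => sSup s.1,
    fun s => (hIoo s s.2).2.2, fun s₁ s₂ hne => ?_, ?_⟩
  · show Disjoint (Ioo (sInf s₁.1) (sSup s₁.1)) (Ioo (sInf s₂.1) (sSup s₂.1))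
    rw [← (hIoo _ s₁.2).2.1, ← (hIoo _ s₂.2).2.1]
    exact hdisj_t _ s₁.2 _ s₂.2 (Subtype.coe_injective.ne hne)
  · refine Subset.antisymm (fun x hx => mem_iUnion.2 ⟨⟨_, hmem_t x hx⟩, ?_⟩)
      (iUnion_subset fun s => (hIoo s s.2).2.1 ▸ (hIoo s s.2).1)
    exact (hIoo _ (hmem_t x hx)).2.1 ▸ mem_connectedComponentIn hx

theorem volume_image_uIcc_le {g : ℝ → ℝ} {a b : ℝ}
    (hg : MonotoneOn g (uIcc a b) ∨ AntitoneOn g (uIcc a b)) :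
    volume (g '' uIcc a b) ≤ ENNReal.ofReal |g b - g a| := by
  rw [← Real.volume_interval]
  exact measure_mono (hg.elim MonotoneOn.mapsTo_uIcc AntitoneOn.mapsTo_uIcc).image_subset

namespace AbsCont

variable {g : ℝ → ℝ}

theorem exists_sum_lt (hg : AbsCont g) {ε : ℝ} (hε : 0 < ε) :
    ∃ δ > 0, ∀ (ι : Type) [Fintype ι] (a b : ι → ℝ), (∀ i, 0 ≤ a i ∧ a i ≤ b i ∧ b i ≤ 1) →
      Pairwise (fun i j => Disjoint (Ioo (a i) (b i)) (Ioo (a j) (b j))) →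
      ∑ i, (b i - a i) < δ → ∑ i, |g (b i) - g (a i)| < ε := by
  obtain ⟨δ, hδ, H⟩ := hg ε hε
  refine ⟨δ, hδ, fun ι _ a b hab hdisj hlen => ?_⟩
  let e := (Fintype.equivFin ι).symm
  have := H _ (a ∘ e) (b ∘ e) (fun i => hab (e i)) (fun i j hij => hdisj (e.injective.ne hij))
    (by simpa only [Function.comp_apply, e.sum_comp (fun i => b i - a i)] using hlen)
  simpa only [Function.comp_apply, e.sum_comp (fun i => |g (b i) - g (a i)|)] using this

theorem continuousOn (hg : AbsCont g) : ContinuousOn g (Icc 0 1) := by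
  refine Metric.continuousOn_iff.2 fun x hx ε hε => ?_
  obtain ⟨δ, hδ, H⟩ := hg.exists_sum_lt hε
  refine ⟨δ, hδ, fun y hy hyx => ?_⟩
  have := H Unit (fun _ => min x y) (fun _ => max x y)
    (fun _ => ⟨le_min hx.1 hy.1, min_le_max, max_le hx.2 hy.2⟩)
    (fun i j hij => (hij (Subsingleton.elim i j)).elim)
    (by simpa [max_sub_min_eq_abs, abs_sub_comm, Real.dist_eq] using hyx)
  rw [Real.dist_eq]
  rcases le_total x y with h | h <;> simpa [h, abs_sub_comm] using this

theorem exists_tsum_le (hg : AbsCont g) {ε : ℝ} (hε : 0 < ε) :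
    ∃ δ > 0, ∀ (ι : Type) (a b : ι → ℝ), (∀ i, 0 ≤ a i ∧ a i ≤ b i ∧ b i ≤ 1) →
      Pairwise (fun i j => Disjoint (Ioo (a i) (b i)) (Ioo (a j) (b j))) →
      volume (⋃ i, Ioo (a i) (b i)) < ENNReal.ofReal δ →
      ∑' i, ENNReal.ofReal |g (b i) - g (a i)| ≤ ENNReal.ofReal ε := by
  obtain ⟨δ, hδ, H⟩ := hg.exists_sum_lt hε
  refine ⟨δ, hδ, fun ι a b hab hdisj hvol => ?_⟩
  rw [ENNReal.tsum_eq_iSup_sum]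
  refine iSup_le fun F => ?_
  have hdisjF : Pairwise fun i j : F => Disjoint (Ioo (a i) (b i)) (Ioo (a j) (b j)) :=
    fun i j hij => hdisj (Subtype.coe_injective.ne hij)
  have hlen : ∑ i : F, (b i - a i) < δ := by
    have : ENNReal.ofReal (∑ i : F, (b i - a i)) ≤ volume (⋃ i, Ioo (a i) (b i)) :=
      calc ENNReal.ofReal (∑ i : F, (b i - a i))
          = ∑ i : F, volume (Ioo (a i) (b i)) := by
            rw [ENNReal.ofReal_sum_of_nonneg fun (i : F) _ => sub_nonneg.2 (hab i).2.1]
            simp only [Real.volume_Ioo]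
        _ = volume (⋃ i : F, Ioo (a i) (b i)) := by
            rw [measure_iUnion hdisjF fun _ => measurableSet_Ioo, tsum_fintype]
        _ ≤ volume (⋃ i, Ioo (a i) (b i)) :=
            measure_mono (iUnion_subset fun i => subset_iUnion (fun j => Ioo (a j) (b j)) i)
    exact (ENNReal.ofReal_lt_ofReal_iff hδ).1 (this.trans_lt hvol)
  calc ∑ i ∈ F, ENNReal.ofReal |g (b i) - g (a i)|
      = ENNReal.ofReal (∑ i : F, |g (b i) - g (a i)|) := by
        rw [ENNReal.ofReal_sum_of_nonneg fun _ _ => abs_nonneg _,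
          Finset.sum_coe_sort F fun i => ENNReal.ofReal |g (b i) - g (a i)|]
    _ ≤ ENNReal.ofReal ε :=
        ENNReal.ofReal_le_ofReal (H F (fun i => a i) (fun i => b i) (fun i => hab i) hdisjF hlen).le

theorem exists_volume_image_le (hg : AbsCont g)
    (hmono : MonotoneOn g (Icc 0 1) ∨ AntitoneOn g (Icc 0 1)) {ε : ℝ} (hε : 0 < ε) :
    ∃ δ > 0, ∀ V : Set ℝ, IsOpen V → V ⊆ Ioo 0 1 → volume V < ENNReal.ofReal δ →
      volume (g '' V) ≤ ENNReal.ofReal ε := by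
  obtain ⟨δ, hδ, H⟩ := hg.exists_tsum_le hε
  refine ⟨δ, hδ, fun V hV hV01 hvol => ?_⟩
  obtain ⟨ι, _, a, b, hab, hdisj, rfl⟩ :=
    hV.exists_countable_pairwiseDisjoint_Ioo ((Metric.isBounded_Ioo 0 1).subset hV01)
  have hbounds : ∀ i, 0 ≤ a i ∧ a i ≤ b i ∧ b i ≤ 1 := fun i => by
    have := (Ioo_subset_Ioo_iff (hab i)).1 ((subset_iUnion _ i).trans hV01)
    exact ⟨this.1, (hab i).le, this.2⟩
  have himage : ∀ i, volume (g '' Ioo (a i) (b i)) ≤ ENNReal.ofReal |g (b i) - g (a i)| := by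
    intro i
    have hsub : uIcc (a i) (b i) ⊆ Icc 0 1 := uIcc_subset_Icc
      ⟨(hbounds i).1, (hbounds i).2.1.trans (hbounds i).2.2⟩
      ⟨(hbounds i).1.trans (hbounds i).2.1, (hbounds i).2.2⟩
    refine le_trans (measure_mono (image_mono ?_))
      (volume_image_uIcc_le (hmono.imp (·.mono hsub) (·.mono hsub)))
    exact uIcc_of_le (hab i).le ▸ Ioo_subset_Icc_self
  calc volume (g '' ⋃ i, Ioo (a i) (b i))
      ≤ ∑' i, volume (g '' Ioo (a i) (b i)) := image_iUnion ▸ measure_iUnion_le _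
    _ ≤ ∑' i, ENNReal.ofReal |g (b i) - g (a i)| := ENNReal.tsum_le_tsum himage
    _ ≤ ENNReal.ofReal ε := H ι a b hbounds hdisj hvol

theorem volume_image_eq_zero (hg : AbsCont g)
    (hmono : MonotoneOn g (Icc 0 1) ∨ AntitoneOn g (Icc 0 1)) {E : Set ℝ} (hE : E ⊆ Icc 0 1)
    (hE0 : volume E = 0) : volume (g '' E) = 0 := by
  have hsub : g '' E ⊆ g '' (E ∩ Ioo 0 1) ∪ {g 0, g 1} := by
    rintro _ ⟨x, hx, rfl⟩
    rcases eq_endpoints_or_mem_Ioo_of_mem_Icc (hE hx) with rfl | rfl | h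
    · exact Or.inr (Or.inl rfl)
    · exact Or.inr (Or.inr rfl)
    · exact Or.inl ⟨x, ⟨hx, h⟩, rfl⟩
  refine measure_mono_null hsub (measure_union_null ?_ ((toFinite _).measure_zero _))
  refine le_antisymm (ENNReal.le_of_forall_pos_le_add fun ε hε _ => ?_) zero_le
  obtain ⟨δ, hδ, H⟩ := hg.exists_volume_image_le hmono (ε := ε) hε
  obtain ⟨U, hEU, hU, hUvol⟩ := exists_isOpen_lt_of_lt (E ∩ Ioo 0 1) (ENNReal.ofReal δ)
    (by rw [measure_mono_null inter_subset_left hE0]; exact ENNReal.ofReal_pos.2 hδ)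
  calc volume (g '' (E ∩ Ioo 0 1))
      ≤ volume (g '' (U ∩ Ioo 0 1)) :=
        measure_mono (image_mono (subset_inter hEU inter_subset_right))
    _ ≤ ENNReal.ofReal ε := H _ (hU.inter isOpen_Ioo) inter_subset_right
        ((measure_mono inter_subset_left).trans_lt hUvol)
    _ = 0 + ε := by simp

end AbsCont

theorem MemM1.measure_compl_Ioo {μ : Measure ℝ} (hμ : MemM1 μ) : μ (Ioo 0 1)ᶜ = 0 := by
  have := hμ.1
  rw [prob_compl_eq_one_sub measurableSet_Ioo, hμ.2, tsub_self]

theorem MemM1.smul_of_le {μ σ : Measure ℝ} (hμ : MemM1 μ) (hσμ : σ ≤ μ) (hσ : σ ≠ 0) :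
    MemM1 ((σ univ)⁻¹ • σ) := by
  have := hμ.1
  have := isFiniteMeasure_of_le μ hσμ
  have hc : σ univ ≠ 0 := (Measure.measure_univ_ne_zero).2 hσ
  have hIoo : σ (Ioo 0 1) = σ univ := by
    rw [← measure_add_measure_compl (μ := σ) measurableSet_Ioo,
      Measure.absolutelyContinuous_of_le hσμ hμ.measure_compl_Ioo, add_zero]
  refine ⟨⟨?_⟩, ?_⟩ <;>
    simp only [Measure.smul_apply, smul_eq_mul, hIoo,
      ENNReal.inv_mul_cancel hc (measure_ne_top _ _)]

section MarkovOperator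

variable {k : ℕ} (g : Fin k → ℝ → ℝ) (p : Fin k → ℝ)

theorem markovOp_apply (hg : ∀ i, Measurable (g i)) (ν : Measure ℝ) {s : Set ℝ}
    (hs : MeasurableSet s) :
    markovOp g p ν s = ∑ i, ENNReal.ofReal (p i) * ν (g i ⁻¹' s) := by
  simp only [markovOp, Measure.finsetSum_apply, Measure.smul_apply, Measure.map_apply (hg _) hs,
    smul_eq_mul]

theorem markovOp_univ (hp : ProbVec p) (hg : ∀ i, Measurable (g i)) (ν : Measure ℝ) :
    markovOp g p ν univ = ν univ := by
  rw [markovOp_apply g p hg ν MeasurableSet.univ]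
  simp only [preimage_univ]
  rw [← Finset.sum_mul, ← ENNReal.ofReal_sum_of_nonneg fun i _ => hp.1 i, hp.2,
    ENNReal.ofReal_one, one_mul]

theorem markovOp_add (hg : ∀ i, Measurable (g i)) (ν₁ ν₂ : Measure ℝ) :
    markovOp g p (ν₁ + ν₂) = markovOp g p ν₁ + markovOp g p ν₂ := by
  simp only [markovOp, Measure.map_add _ _ (hg _), smul_add, Finset.sum_add_distrib]

theorem markovOp_smul (c : ENNReal) (ν : Measure ℝ) :
    markovOp g p (c • ν) = c • markovOp g p ν := by
  simp only [markovOp, Measure.map_smul, Finset.smul_sum, smul_comm c]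

theorem markovOp_mutuallySingular (hg : ∀ i, Measurable (g i)) {ν ρ : Measure ℝ} {s : Set ℝ}
    (hνs : ν sᶜ = 0) (hN : ∀ i, ∀ E ⊆ s, ρ E = 0 → ρ (g i '' E) = 0) (hνρ : ν ⟂ₘ ρ) :
    markovOp g p ν ⟂ₘ ρ := by
  obtain ⟨T, -, hνT, hρT⟩ := hνρ
  set N := toMeasurable ρ (⋃ i, g i '' (Tᶜ ∩ s))
  have hN0 : ρ N = 0 := by
    rw [measure_toMeasurable]
    exact measure_iUnion_null fun i =>
      hN i _ inter_subset_right (measure_mono_null inter_subset_left hρT)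
  refine ⟨Nᶜ, (measurableSet_toMeasurable _ _).compl, ?_, by rwa [compl_compl]⟩
  rw [markovOp_apply g p hg ν (measurableSet_toMeasurable _ _).compl]
  refine Finset.sum_eq_zero fun i _ => ?_
  have hsub : g i ⁻¹' Nᶜ ⊆ T ∪ sᶜ := fun x hx => by
    by_contra h
    simp only [mem_union, mem_compl_iff, not_or, not_not] at h
    exact hx (subset_toMeasurable _ _ (mem_iUnion.2 ⟨i, x, ⟨h.1, h.2⟩, rfl⟩))
  rw [measure_mono_null hsub (measure_union_null hνT hνs), mul_zero]

theorem markovOp_singularPart_eq (hp : ProbVec p) (hg : ∀ i, Measurable (g i))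
    {μ ν : Measure ℝ} [IsFiniteMeasure μ] [SigmaFinite ν] (hinv : markovOp g p μ = μ)
    (hsing : markovOp g p (μ.singularPart ν) ⟂ₘ ν) :
    markovOp g p (μ.singularPart ν) = μ.singularPart ν := by
  have hfin : ∀ m, IsFiniteMeasure m → IsFiniteMeasure (markovOp g p m) := fun m _ =>
    ⟨by rw [markovOp_univ g p hp hg]; exact measure_lt_top _ _⟩
  have := hfin (μ.singularPart ν) inferInstance
  have := hfin (ν.withDensity (μ.rnDeriv ν)) inferInstance
  have h : μ.singularPart ν = markovOp g p (μ.singularPart ν) +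
      (markovOp g p (ν.withDensity (μ.rnDeriv ν))).singularPart ν := by
    conv_lhs => rw [← hinv, μ.haveLebesgueDecomposition_add ν, markovOp_add g p hg,
      Measure.singularPart_add, Measure.singularPart_eq_self.2 hsing]
  -- `P` preserves total mass, so the image of the absolutely continuous part has no singular part.
  have hmass := congrArg (· univ) h
  simp only [Measure.add_apply, markovOp_univ g p hp hg] at hmass
  have hzero :=
    (ENNReal.add_right_inj (measure_ne_top _ univ)).1 (hmass.symm.trans (add_zero _).symm)
  rw [Measure.measure_univ_eq_zero.1 hzero, add_zero] at h
  exact h.symm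

end MarkovOperator

theorem invariant_measure_dichotomy_general (k : ℕ)
    (g ginv : Fin k → ℝ → ℝ) (p : Fin k → ℝ) (hp : ProbVec p)
    (hmeas : ∀ i, Measurable (g i))
    (hli : ∀ i, ∀ x ∈ Icc (0 : ℝ) 1, ginv i (g i x) = x)
    (hac : ∀ i, AbsCont (g i))
    (μ : Measure ℝ) (hμ : MemM1 μ) (hinv : markovOp g p μ = μ)
    (huniq : ∀ ν : Measure ℝ, MemM1 ν → markovOp g p ν = ν → ν = μ) :
    μ ≪ (volume : Measure ℝ) ∨ μ ⟂ₘ (volume : Measure ℝ) := by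
  have := hμ.1
  set σ := μ.singularPart volume
  by_cases hσ : σ = 0
  · exact Or.inl ((Measure.singularPart_eq_zero μ volume).1 hσ)
  have hmono : ∀ i, MonotoneOn (g i) (Icc 0 1) ∨ AntitoneOn (g i) (Icc 0 1) := fun i =>
    ((hac i).continuousOn.strictMonoOn_of_injOn_Icc' zero_le_one
      (LeftInvOn.injOn fun x hx => hli i x hx)).imp StrictMonoOn.monotoneOn StrictAntiOn.antitoneOn
  have hPσ : markovOp g p σ ⟂ₘ volume :=
    markovOp_mutuallySingular g p hmeas
      (Measure.absolutelyContinuous_of_le (Measure.singularPart_le μ volume) hμ.measure_compl_Ioo)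
      (fun i E hE => (hac i).volume_image_eq_zero (hmono i) (hE.trans Ioo_subset_Icc_self))
      (Measure.mutuallySingular_singularPart μ volume)
  have hσinv := markovOp_singularPart_eq g p hp hmeas hinv hPσ
  have hμσ := huniq _ (hμ.smul_of_le (Measure.singularPart_le μ volume) hσ)
    (by rw [markovOp_smul, hσinv])
  exact Or.inr (hμσ ▸ (Measure.mutuallySingular_singularPart μ volume).smul _)

/-- If the maps of an IFS are absolutely continuous homeomorphisms
of `[0,1]` with absolutely continuous inverses and the Markov operator has a
unique invariant measure `μ` in `M₁(0,1)`, then `μ` is either absolutely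
continuous or singular with respect to Lebesgue measure. -/
theorem invariant_measure_dichotomy (k : ℕ)
    (g ginv : Fin k → ℝ → ℝ) (p : Fin k → ℝ) (hp : ProbVec p)
    (hmeas : ∀ i, Measurable (g i)) (hmeasinv : ∀ i, Measurable (ginv i))
    (hmaps : ∀ i, MapsTo (g i) (Icc (0 : ℝ) 1) (Icc (0 : ℝ) 1))
    (hmapsinv : ∀ i, MapsTo (ginv i) (Icc (0 : ℝ) 1) (Icc (0 : ℝ) 1))
    (hli : ∀ i, ∀ x ∈ Icc (0 : ℝ) 1, ginv i (g i x) = x)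
    (hri : ∀ i, ∀ y ∈ Icc (0 : ℝ) 1, g i (ginv i y) = y)
    (hac : ∀ i, AbsCont (g i)) (hacinv : ∀ i, AbsCont (ginv i))
    (μ : Measure ℝ) (hμ : MemM1 μ) (hinv : markovOp g p μ = μ)
    (huniq : ∀ ν : Measure ℝ, MemM1 ν → markovOp g p ν = ν → ν = μ) :
    μ ≪ (volume : Measure ℝ) ∨ μ ⟂ₘ (volume : Measure ℝ) :=
  invariant_measure_dichotomy_general k g ginv p hp hmeas hli hac μ hμ hinv huniq
end
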